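/- arXiv:2211.15808 — 2 statements merged into one kernel-verified Lean document; each statement's English description precedes it below -/
import Mathlib

section
/- Let σ be a relational vocabulary. In the category of σ-structures, embeddings are stable under pushout along embeddings: if A ↢ C ↣ B is a span of embeddings, then in the pushout square both morphisms A → A +_C B and B → A +_C B are embeddings. Moreover this pushout square is also a pullback square. -/
open CategoryTheory FirstOrder

universe u v w

/-- The category of `L`-structures and `L`-homomorphisms. -/
structure StructCat (L : FirstOrder.Language.{u, v}) : Type (max (w + 1) u v) where
  carrier : Type w
  [str : L.Structure carrier]

attribute [instance] StructCat.str

instance {L : FirstOrder.Language.{u, v}} : CoeSort (StructCat.{u, v, w} L) (Type w) :=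
  ⟨StructCat.carrier⟩

instance {L : FirstOrder.Language.{u, v}} : Category (StructCat.{u, v, w} L) where
  Hom A B := A →[L] B
  id A := FirstOrder.Language.Hom.id L A
  comp f g := g.comp f
  id_comp _ := rfl
  comp_id _ := rfl
  assoc _ _ _ := rfl


/-- The underlying `L`-homomorphism of a morphism in `StructCat L`. -/
def StructCat.toHom {L : FirstOrder.Language.{u, v}} {A B : StructCat.{u, v, w} L}
    (f : A ⟶ B) : A →[L] B := f

/-- The class of surjective homomorphisms. -/
def Surjections (L : FirstOrder.Language.{u, v}) :
    MorphismProperty (StructCat.{u, v, w} L) :=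
  fun A B f => Function.Surjective (StructCat.toHom f)

/-- The class of embeddings: injective homomorphisms reflecting all relations. -/
def Embeddings (L : FirstOrder.Language.{u, v}) :
    MorphismProperty (StructCat.{u, v, w} L) :=
  fun A B f => Function.Injective (StructCat.toHom f) ∧
    ∀ {n : ℕ} (R : L.Relations n) (x : Fin n → A),
      FirstOrder.Language.Structure.RelMap R (StructCat.toHom f ∘ x) →
        FirstOrder.Language.Structure.RelMap R x

namespace StructCatPush

open FirstOrder.Language (Structure)

variable {L : FirstOrder.Language.{u, v}}
variable {Z A B : StructCat.{u, v, w} L}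

/-- The gluing relation on the disjoint union. -/
def rel (f : Z ⟶ A) (g : Z ⟶ B) :
    A.carrier ⊕ B.carrier → A.carrier ⊕ B.carrier → Prop
  | .inl a, .inl a' => a = a'
  | .inl a, .inr b => ∃ z, StructCat.toHom f z = a ∧ StructCat.toHom g z = b
  | .inr b, .inl a => ∃ z, StructCat.toHom f z = a ∧ StructCat.toHom g z = b
  | .inr b, .inr b' => b = b'

def setoid (f : Z ⟶ A) (g : Z ⟶ B)
    (hfi : Function.Injective (StructCat.toHom f))
    (hgi : Function.Injective (StructCat.toHom g)) :
    Setoid (A.carrier ⊕ B.carrier) where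
  r := rel f g
  iseqv := by
    constructor
    · rintro (a | b)
      · exact rfl
      · exact rfl
    · rintro (a | b) (a' | b') h
      · exact h.symm
      · exact h
      · exact h
      · exact h.symm
    · rintro (a | b) (a' | b') (a'' | b'') h1 h2
      · exact h1.trans h2
      · exact h1 ▸ h2
      · obtain ⟨z, hz1, hz2⟩ := h1
        obtain ⟨z', hz1', hz2'⟩ := h2
        rw [← hz1, ← hz1', hgi (hz2.trans hz2'.symm)]
        exact rfl
      · obtain ⟨z, hz1, hz2⟩ := h1
        exact ⟨z, hz1, hz2.trans h2⟩
      · obtain ⟨z, hz1, hz2⟩ := h1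
        exact ⟨z, hz1.trans h2, hz2⟩
      · obtain ⟨z, hz1, hz2⟩ := h1
        obtain ⟨z', hz1', hz2'⟩ := h2
        rw [← hz2, ← hz2', hfi (hz1.trans hz1'.symm)]
        exact rfl
      · obtain ⟨z, hz1, hz2⟩ := h2
        exact ⟨z, hz1, hz2.trans h1.symm⟩
      · exact h1.trans h2

variable (hrel : ∀ n, IsEmpty (L.Functions n)) (f : Z ⟶ A) (g : Z ⟶ B)
    (hfi : Function.Injective (StructCat.toHom f))
    (hgi : Function.Injective (StructCat.toHom g))

def glue : StructCat.{u, v, w} L where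
  carrier := Quotient (setoid f g hfi hgi)
  str :=
    { funMap := fun {n} F _ => (hrel n).elim F
      RelMap := fun {n} R x =>
        (∃ a : Fin n → A.carrier, FirstOrder.Language.Structure.RelMap R a ∧
          ∀ i, x i = Quotient.mk (setoid f g hfi hgi) (.inl (a i))) ∨
        (∃ b : Fin n → B.carrier, FirstOrder.Language.Structure.RelMap R b ∧
          ∀ i, x i = Quotient.mk (setoid f g hfi hgi) (.inr (b i))) }

def inlHom : A ⟶ glue hrel f g hfi hgi where
  toFun a := Quotient.mk (setoid f g hfi hgi) (.inl a)
  map_fun' {n} F _ := (hrel n).elim F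
  map_rel' {n} R x hx := Or.inl ⟨x, hx, fun _ => rfl⟩

def inrHom : B ⟶ glue hrel f g hfi hgi where
  toFun b := Quotient.mk (setoid f g hfi hgi) (.inr b)
  map_fun' {n} F _ := (hrel n).elim F
  map_rel' {n} R x hx := Or.inr ⟨x, hx, fun _ => rfl⟩

theorem comm : f ≫ inlHom hrel f g hfi hgi = g ≫ inrHom hrel f g hfi hgi :=
  FirstOrder.Language.Hom.ext fun z => Quotient.sound ⟨z, rfl, rfl⟩

theorem inl_injective :
    Function.Injective (StructCat.toHom (inlHom hrel f g hfi hgi)) :=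
  fun _ _ hq => Quotient.exact hq

theorem inr_injective :
    Function.Injective (StructCat.toHom (inrHom hrel f g hfi hgi)) :=
  fun _ _ hq => Quotient.exact hq

theorem inl_reflects (hf : Embeddings L f) (hg : Embeddings L g) {n : ℕ}
    (R : L.Relations n) (x : Fin n → A.carrier)
    (hx : FirstOrder.Language.Structure.RelMap R
      (StructCat.toHom (inlHom hrel f g hfi hgi) ∘ x)) :
    FirstOrder.Language.Structure.RelMap R x := by
  rcases hx with ⟨a, ha, he⟩ | ⟨b, hb, he⟩
  · have : x = a := funext fun i => Quotient.exact (he i)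
    rwa [this]
  · have hz : ∀ i, ∃ z, StructCat.toHom f z = x i ∧ StructCat.toHom g z = b i :=
      fun i => Quotient.exact (he i)
    choose z hz1 hz2 using hz
    have hgz : StructCat.toHom g ∘ z = b := funext hz2
    have hzrel : FirstOrder.Language.Structure.RelMap R z :=
      hg.2 R z (by rwa [hgz])
    have := (StructCat.toHom f).map_rel R z hzrel
    rwa [show StructCat.toHom f ∘ z = x from funext hz1] at this

theorem inr_reflects (hf : Embeddings L f) (hg : Embeddings L g) {n : ℕ}
    (R : L.Relations n) (x : Fin n → B.carrier)
    (hx : FirstOrder.Language.Structure.RelMap R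
      (StructCat.toHom (inrHom hrel f g hfi hgi) ∘ x)) :
    FirstOrder.Language.Structure.RelMap R x := by
  rcases hx with ⟨a, ha, he⟩ | ⟨b, hb, he⟩
  · have hz : ∀ i, ∃ z, StructCat.toHom f z = a i ∧ StructCat.toHom g z = x i :=
      fun i => (setoid f g hfi hgi).symm (Quotient.exact (he i))
    choose z hz1 hz2 using hz
    have hfz : StructCat.toHom f ∘ z = a := funext hz1
    have hzrel : FirstOrder.Language.Structure.RelMap R z :=
      hf.2 R z (by rwa [hfz])
    have := (StructCat.toHom g).map_rel R z hzrel
    rwa [show StructCat.toHom g ∘ z = x from funext hz2] at this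
  · have : x = b := funext fun i => Quotient.exact (he i)
    rwa [this]

def descHom (s : Limits.PushoutCocone f g) : glue hrel f g hfi hgi ⟶ s.pt where
  toFun := Quotient.lift (Sum.elim (StructCat.toHom s.inl) (StructCat.toHom s.inr)) (by
    have hc : ∀ z, StructCat.toHom s.inl (StructCat.toHom f z)
        = StructCat.toHom s.inr (StructCat.toHom g z) :=
      fun z => congrArg (fun (m : Z ⟶ s.pt) => StructCat.toHom m z) s.condition
    rintro (a | b) (a' | b') h
    · rw [show a = a' from h]
    · obtain ⟨z, hz1, hz2⟩ := (show ∃ z, StructCat.toHom f z = a ∧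
        StructCat.toHom g z = b' from h)
      simp only [Sum.elim_inl, Sum.elim_inr, ← hz1, ← hz2]
      exact hc z
    · obtain ⟨z, hz1, hz2⟩ := (show ∃ z, StructCat.toHom f z = a' ∧
        StructCat.toHom g z = b from h)
      simp only [Sum.elim_inl, Sum.elim_inr, ← hz1, ← hz2]
      exact (hc z).symm
    · rw [show b = b' from h])
  map_fun' {n} F _ := (hrel n).elim F
  map_rel' {n} R x hx := by
    rcases hx with ⟨a, ha, he⟩ | ⟨b, hb, he⟩
    · rw [funext he]
      exact (StructCat.toHom s.inl).map_rel R a ha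
    · rw [funext he]
      exact (StructCat.toHom s.inr).map_rel R b hb

theorem isPushout : IsPushout f g (inlHom hrel f g hfi hgi) (inrHom hrel f g hfi hgi) := by
  refine IsPushout.of_isColimit' ⟨comm hrel f g hfi hgi⟩ ?_
  refine Limits.PushoutCocone.IsColimit.mk _ (fun s => descHom hrel f g hfi hgi s)
    (fun s => FirstOrder.Language.Hom.ext fun a => rfl)
    (fun s => FirstOrder.Language.Hom.ext fun b => rfl)
    (fun s m h1 h2 => ?_)
  refine FirstOrder.Language.Hom.ext fun q => ?_
  refine Quotient.inductionOn q ?_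
  rintro (a | b)
  · exact congrArg (fun (m' : A ⟶ s.pt) => StructCat.toHom m' a) h1
  · exact congrArg (fun (m' : B ⟶ s.pt) => StructCat.toHom m' b) h2

theorem glue_exact {a : A.carrier} {b : B.carrier}
    (h : StructCat.toHom (inlHom hrel f g hfi hgi) a
        = StructCat.toHom (inrHom hrel f g hfi hgi) b) :
    ∃ z, StructCat.toHom f z = a ∧ StructCat.toHom g z = b :=
  Quotient.exact h

theorem liftAux (s : Limits.PullbackCone
    (inlHom hrel f g hfi hgi) (inrHom hrel f g hfi hgi)) (q : s.pt.carrier) :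
    ∃ z, StructCat.toHom f z = StructCat.toHom s.fst q ∧
      StructCat.toHom g z = StructCat.toHom s.snd q :=
  glue_exact hrel f g hfi hgi
    (congrArg (fun (m : s.pt ⟶ glue hrel f g hfi hgi) => StructCat.toHom m q) s.condition)

noncomputable def liftHom (hf : Embeddings L f) (s : Limits.PullbackCone
    (inlHom hrel f g hfi hgi) (inrHom hrel f g hfi hgi)) : s.pt ⟶ Z where
  toFun q := (liftAux hrel f g hfi hgi s q).choose
  map_fun' {n} F _ := (hrel n).elim F
  map_rel' {n} R x hx := hf.2 R _ (by
    have heq : StructCat.toHom f ∘ ((fun q => (liftAux hrel f g hfi hgi s q).choose) ∘ x)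
        = StructCat.toHom s.fst ∘ x :=
      funext fun i => (liftAux hrel f g hfi hgi s (x i)).choose_spec.1
    rw [heq]
    exact (StructCat.toHom s.fst).map_rel R x hx)

theorem liftHom_spec (hf : Embeddings L f) (s : Limits.PullbackCone
    (inlHom hrel f g hfi hgi) (inrHom hrel f g hfi hgi)) (q : s.pt.carrier) :
    StructCat.toHom f (StructCat.toHom (liftHom hrel f g hfi hgi hf s) q)
        = StructCat.toHom s.fst q ∧
    StructCat.toHom g (StructCat.toHom (liftHom hrel f g hfi hgi hf s) q)
        = StructCat.toHom s.snd q :=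
  (liftAux hrel f g hfi hgi s q).choose_spec

theorem isPullback (hf : Embeddings L f) :
    IsPullback f g (inlHom hrel f g hfi hgi) (inrHom hrel f g hfi hgi) := by
  refine IsPullback.of_isLimit' ⟨comm hrel f g hfi hgi⟩ ?_
  refine Limits.PullbackCone.IsLimit.mk _ (fun s => liftHom hrel f g hfi hgi hf s)
    (fun s => FirstOrder.Language.Hom.ext fun q =>
      (liftHom_spec hrel f g hfi hgi hf s q).1)
    (fun s => FirstOrder.Language.Hom.ext fun q =>
      (liftHom_spec hrel f g hfi hgi hf s q).2)
    (fun s m h1 h2 => ?_)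
  refine FirstOrder.Language.Hom.ext fun q => ?_
  apply hfi
  refine (congrArg (fun (m' : s.pt ⟶ A) => StructCat.toHom m' q) h1).trans ?_
  exact ((liftHom_spec hrel f g hfi hgi hf s q).1).symm

end StructCatPush

theorem embeddings_comp {L : FirstOrder.Language.{u, v}} {A B C : StructCat.{u, v, w} L}
    {m : A ⟶ B} {e : B ⟶ C} (hm : Embeddings L m) (he : Embeddings L e) :
    Embeddings L (m ≫ e) := by
  constructor
  · intro a a' hq
    exact hm.1 (he.1 hq)
  · intro n R x hx
    exact hm.2 R x (he.2 R (StructCat.toHom m ∘ x) hx)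

theorem embeddings_of_iso {L : FirstOrder.Language.{u, v}} {A B : StructCat.{u, v, w} L}
    (e : A ≅ B) : Embeddings L e.hom := by
  have hid : ∀ a, StructCat.toHom e.inv (StructCat.toHom e.hom a) = a := fun a =>
    congrArg (fun (m : A ⟶ A) => StructCat.toHom m a) e.hom_inv_id
  constructor
  · intro a a' hq
    rw [← hid a, ← hid a', hq]
  · intro n R x hx
    have h2 := (StructCat.toHom e.inv).map_rel R (StructCat.toHom e.hom ∘ x) hx
    have h3 : StructCat.toHom e.inv ∘ (StructCat.toHom e.hom ∘ x) = x :=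
      funext fun i => hid (x i)
    rwa [h3] at h2

/-- In the category of `L`-structures over a relational vocabulary, embeddings are
stable under pushout along embeddings, and pushout squares of embeddings are also
pullback squares: given a span of embeddings `f : C ↣ A`, `g : C ↣ B` and a pushout
square `f ≫ h = g ≫ k`, both `h` and `k` are embeddings and the square is a
pullback. -/
theorem structCat_pushout_of_embeddings
    (L : FirstOrder.Language.{u, v}) (hrel : ∀ n, IsEmpty (L.Functions n))
    {Z A B P : StructCat.{u, v, w} L} (f : Z ⟶ A) (g : Z ⟶ B) (h : A ⟶ P) (k : B ⟶ P)
    (hf : Embeddings L f) (hg : Embeddings L g)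
    (hpo : IsPushout f g h k) :
    Embeddings L h ∧ Embeddings L k ∧ IsPullback f g h k := by

  have hpo' := StructCatPush.isPushout hrel f g hf.1 hg.1
  have hpb' := StructCatPush.isPullback hrel f g hf.1 hg.1 hf
  set e := hpo'.isoIsPushout _ _ hpo with he
  have hinl : StructCatPush.inlHom hrel f g hf.1 hg.1 ≫ e.hom = h :=
    hpo'.inl_isoIsPushout_hom _ _ hpo
  have hinr : StructCatPush.inrHom hrel f g hf.1 hg.1 ≫ e.hom = k :=
    hpo'.inr_isoIsPushout_hom _ _ hpo
  have hembl : Embeddings L (StructCatPush.inlHom hrel f g hf.1 hg.1) :=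
    ⟨StructCatPush.inl_injective hrel f g hf.1 hg.1,
      fun R x hx => StructCatPush.inl_reflects hrel f g hf.1 hg.1 hf hg R x hx⟩
  have hembr : Embeddings L (StructCatPush.inrHom hrel f g hf.1 hg.1) :=
    ⟨StructCatPush.inr_injective hrel f g hf.1 hg.1,
      fun R x hx => StructCatPush.inr_reflects hrel f g hf.1 hg.1 hf hg R x hx⟩
  refine ⟨?_, ?_, ?_⟩
  · rw [← hinl]
    exact embeddings_comp hembl (embeddings_of_iso e)
  · rw [← hinr]
    exact embeddings_comp hembr (embeddings_of_iso e)
  · refine hpb'.of_iso (Iso.refl Z) (Iso.refl A) (Iso.refl B) e ?_ ?_ ?_ ?_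
    · simp
    · simp
    · simp only [Iso.refl_hom, Category.id_comp]; exact hinl
    · simp only [Iso.refl_hom, Category.id_comp]; exact hinr
end

section
/- Let C be a category with a proper factorisation system in which there is at most one M-morphism (embedding) between any two paths, and such that the full subcategory of paths is locally finite. If f : P → Q and g : Q → P are quotients (Q-morphisms) between paths, then f and g are mutually inverse isomorphisms. -/
open CategoryTheory

universe v u

variable {C : Type u} [Category.{v} C]

/-- `(Q, M)` is a weak factorisation system: every morphism factors as an `M`-morphism
after a `Q`-morphism, and the two classes are determined by mutual lifting properties. -/
def IsWFS (Q M : MorphismProperty C) : Prop :=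
  (∀ {X Y : C} (f : X ⟶ Y), ∃ (Z : C) (e : X ⟶ Z) (m : Z ⟶ Y), Q e ∧ M m ∧ e ≫ m = f) ∧
  (∀ {X Y : C} (e : X ⟶ Y), Q e ↔ ∀ {A B : C} (m : A ⟶ B), M m → HasLiftingProperty e m) ∧
  (∀ {X Y : C} (m : X ⟶ Y), M m ↔ ∀ {A B : C} (e : A ⟶ B), Q e → HasLiftingProperty e m)

/-- A proper weak factorisation system: additionally quotients are epic and
embeddings are monic. -/
def IsProperWFS (Q M : MorphismProperty C) : Prop :=
  IsWFS Q M ∧ (∀ {X Y : C} (f : X ⟶ Y), Q f → Epi f) ∧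
    (∀ {X Y : C} (f : X ⟶ Y), M f → Mono f)

/-- The factorisation preorder on `M`-subobjects of `X`:
`p ≤ q` iff `p` factors through `q`. -/
def MSubLe (M : MorphismProperty C) {X : C}
    (p q : Σ S : C, {m : S ⟶ X // M m}) : Prop :=
  ∃ i : p.1 ⟶ q.1, i ≫ q.2.1 = p.2.1

/-- `X` is a path: the poset of `M`-subobjects of `X` (the antisymmetrisation of the
factorisation preorder) is a finite chain. -/
def IsPath (M : MorphismProperty C) (X : C) : Prop :=
  (∀ p q : Σ S : C, {m : S ⟶ X // M m}, MSubLe M p q ∨ MSubLe M q p) ∧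
  Finite (Quot (fun p q : Σ S : C, {m : S ⟶ X // M m} => MSubLe M p q ∧ MSubLe M q p))

/-!
Quotients are stable under composition, so `g ≫ f` and `f ≫ g` are quotient endomorphisms of
paths. An epic endomorphism of an object with finitely many endomorphisms is right cancellable
in the finite monoid `End P`, hence invertible. Isomorphisms are embeddings, so by uniqueness of
embeddings between paths it is `𝟙 P`.
-/

namespace IsWFS

variable {Q M : MorphismProperty C}

lemma eq_llp (h : IsWFS Q M) : Q = M.llp := by
  ext X Y e
  exact h.2.1 e

lemma eq_rlp (h : IsWFS Q M) : M = Q.rlp := by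
  ext X Y m
  exact h.2.2 m

lemma left_comp_mem (h : IsWFS Q M) {X Y Z : C} (f : X ⟶ Y) (g : Y ⟶ Z) (hf : Q f)
    (hg : Q g) : Q (f ≫ g) := by
  rw [h.eq_llp] at hf hg ⊢
  exact M.llp.comp_mem f g hf hg

lemma right_of_isIso (h : IsWFS Q M) {X Y : C} (f : X ⟶ Y) [IsIso f] : M f :=
  h.eq_rlp ▸ Q.rlp_of_isIso f

end IsWFS

lemma isIso_of_epi_of_finite_end {X : C} [Finite (X ⟶ X)] (e : X ⟶ X) [Epi e] : IsIso e := by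
  have : Finite (End X) := ‹Finite (X ⟶ X)›
  have hreg : IsRightRegular (show End X from e) := fun _ _ hab => (cancel_epi e).mp hab
  exact (isUnit_iff_isIso _).mp hreg.isUnit_of_finite

lemma IsProperWFS.eq_id_of_left_of_finite_end {Q M : MorphismProperty C} (h : IsProperWFS Q M)
    {P : C} [Finite (P ⟶ P)] (huniq : ∀ m n : P ⟶ P, M m → M n → m = n)
    (e : P ⟶ P) (he : Q e) : e = 𝟙 P := by
  have : Epi e := h.2.1 e he
  have : IsIso e := isIso_of_epi_of_finite_end e
  exact huniq e (𝟙 P) (h.1.right_of_isIso e) (h.1.right_of_isIso (𝟙 P))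

/-- In a category with a proper factorisation system such that there is at most one
embedding between any two paths and the full subcategory of paths is locally finite,
any two quotients `f : P → Q` and `g : Q → P` between paths are mutually inverse
isomorphisms. -/
theorem quotients_between_paths_are_inverse
    (Q M : MorphismProperty C) (h : IsProperWFS Q M)
    (huniq : ∀ {P₁ P₂ : C}, IsPath M P₁ → IsPath M P₂ →
      ∀ (m n : P₁ ⟶ P₂), M m → M n → m = n)
    (hlf : ∀ {P₁ P₂ : C}, IsPath M P₁ → IsPath M P₂ → Finite (P₁ ⟶ P₂))
    {P₁ P₂ : C} (hP₁ : IsPath M P₁) (hP₂ : IsPath M P₂)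
    (f : P₁ ⟶ P₂) (g : P₂ ⟶ P₁) (hf : Q f) (hg : Q g) :
    f ≫ g = 𝟙 P₁ ∧ g ≫ f = 𝟙 P₂ := by
  have := hlf hP₁ hP₁
  have := hlf hP₂ hP₂
  exact ⟨h.eq_id_of_left_of_finite_end (huniq hP₁ hP₁) _ (h.1.left_comp_mem f g hf hg),
    h.eq_id_of_left_of_finite_end (huniq hP₂ hP₂) _ (h.1.left_comp_mem g f hg hf)⟩
end
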